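/- Let f₁,…,f_m, g : ℝⁿ → ℝ be Borel measurable, S ⊆ ℝⁿ, φ ∈ ℝᵐ, and suppose σ₊ = sup{z : (φ,z) ∈ γ(S,φ)} is finite. Then there exist α ∈ ℝᵐ, β ≥ 0 and c ∈ ℝ with (α,β) ≠ 0 such that ⟨α, f(x)⟩ + β·g(x) + c ≤ 0 for all x ∈ S, and the supremum over μ ∈ M(S,φ) of E_μ[⟨α, f(X)⟩ + β·g(X) + c] equals 0. -/

import Mathlib

open MeasureTheory Set Filter Topology
open scoped BigOperators ENNReal

noncomputable section

/-- The support of a measure: points all of whose open neighborhoods have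
positive measure. -/
def msupport {E : Type*} [TopologicalSpace E] [MeasurableSpace E]
    (μ : Measure E) : Set E :=
  {x | ∀ U : Set E, IsOpen U → x ∈ U → μ U ≠ 0}

/-- `M(S,φ)`: Borel probability measures with support contained in `S`,
with `E[f i] = φ i` for all `i` and `E[g]` finite. -/
def MC (n m : ℕ) (f : (Fin n → ℝ) → Fin m → ℝ) (g : (Fin n → ℝ) → ℝ)
    (S : Set (Fin n → ℝ)) (φ : Fin m → ℝ) : Set (Measure (Fin n → ℝ)) :=
  {μ | IsProbabilityMeasure μ ∧ msupport μ ⊆ S ∧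
    (∀ i, Integrable (fun x => f x i) μ) ∧ (∀ i, ∫ x, f x i ∂μ = φ i) ∧
    Integrable g μ}

/-- `γ(S,φ)`: intersection of the convex hull of `Γ(S)` with the line `{φ} × ℝ`,
where `Γ x = (f x, g x) ∈ ℝ^m × ℝ`. -/
def gam (n m : ℕ) (f : (Fin n → ℝ) → Fin m → ℝ) (g : (Fin n → ℝ) → ℝ)
    (S : Set (Fin n → ℝ)) (φ : Fin m → ℝ) : Set ((Fin m → ℝ) × ℝ) :=
  convexHull ℝ ((fun x => (f x, g x)) '' S) ∩ {p | p.1 = φ}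

/-!
The slice `{z | (φ, z) ∈ conv Γ(S)}` has supremum `σ₊`, so `(φ, σ₊)` is not an interior point
of `conv Γ(S) + {0} × (-∞, 0]`, and a supporting functional `F = (α, β)` there has `β ≥ 0`.
Then `F ∘ Γ - F(φ, σ₊) ≤ 0` on `S`, hence its mean is `≤ 0` under every `μ ∈ M(S, φ)`, while a
point `(φ, z)` of the slice is the mean of `Γ` under a finitely supported `μ`, where the mean of
`F ∘ Γ - F(φ, σ₊)` is `β (z - σ₊)`; these values approach `0` as `z → σ₊`.
-/

open scoped Pointwise

lemma exists_ne_zero_forall_eq_of_affineSpan_ne_top {K V : Type*} [Field K] [AddCommGroup V]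
    [Module K V] {s : Set V} {p : V} (hp : p ∈ s) (hs : affineSpan K s ≠ ⊤) :
    ∃ F : V →ₗ[K] K, F ≠ 0 ∧ ∀ y ∈ s, F y = F p := by
  have hdir : (affineSpan K s).direction < ⊤ := lt_top_iff_ne_top.2 fun h =>
    hs ((AffineSubspace.direction_eq_top_iff_of_nonempty ((affineSpan_nonempty K).2 ⟨p, hp⟩)).1 h)
  obtain ⟨F, hF0, hker⟩ := Submodule.exists_le_ker_of_lt_top _ hdir
  refine ⟨F, hF0, fun y hy => ?_⟩
  rw [← sub_eq_zero, ← map_sub]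
  exact hker (AffineSubspace.vsub_mem_direction (subset_affineSpan K s hy)
    (subset_affineSpan K s hp))

lemma exists_ne_zero_forall_le_of_notMem_interior {E : Type*} [NormedAddCommGroup E]
    [NormedSpace ℝ E] [FiniteDimensional ℝ E] {K : Set E} {x : E} (hK : Convex ℝ K)
    (hne : K.Nonempty) (hx : x ∉ interior K) :
    ∃ F : StrongDual ℝ E, F ≠ 0 ∧ ∀ y ∈ K, F y ≤ F x := by
  by_cases hint : (interior K).Nonempty
  · exact geometric_hahn_banach_of_nonempty_interior_point hK hx hint
  obtain ⟨p, hp⟩ := hne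
  obtain ⟨G, hG0, hG⟩ := exists_ne_zero_forall_eq_of_affineSpan_ne_top hp
    (mt hK.interior_nonempty_iff_affineSpan_eq_top.2 hint)
  have hF0 : LinearMap.toContinuousLinearMap G ≠ 0 :=
    LinearMap.toContinuousLinearMap.map_ne_zero_iff.2 hG0
  rcases le_total (G p) (G x) with h | h
  · exact ⟨_, hF0, fun y hy => by simpa [hG y hy] using h⟩
  · exact ⟨-_, neg_ne_zero.2 hF0, fun y hy => by simpa [hG y hy] using h⟩

theorem exists_supporting_functional_of_isLUB {E : Type*} [NormedAddCommGroup E]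
    [NormedSpace ℝ E] [FiniteDimensional ℝ E] {C : Set (E × ℝ)} (hC : Convex ℝ C) {φ : E} {σ : ℝ}
    (hσ : IsLUB {z | (φ, z) ∈ C} σ) :
    ∃ F : StrongDual ℝ (E × ℝ), F ≠ 0 ∧ 0 ≤ F (0, 1) ∧ ∀ p ∈ C, F p ≤ F (φ, σ) := by
  -- Pushing `C` downwards keeps its slice over `φ` below `σ` but puts `(φ, σ - 1)` into it,
  -- which forces the supporting functional to be nondecreasing in the last coordinate.
  set K := C + ({0} ×ˢ Iic 0 : Set (E × ℝ))
  have hCK : C ⊆ K := fun p hp => ⟨p, hp, 0, ⟨rfl, mem_Iic.2 le_rfl⟩, add_zero p⟩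
  have hsec : ∀ t, (φ, t) ∈ K → t ≤ σ := by
    rintro t ⟨k, hk, d, ⟨hd₁, hd₂⟩, hkd⟩
    have hk₁ : k.1 = φ := by simpa [mem_singleton_iff.1 hd₁] using congrArg Prod.fst hkd
    have hk₂ : k.2 ≤ σ := hσ.1 (show (φ, k.2) ∈ C by rwa [← hk₁])
    have ht : k.2 + d.2 = t := congrArg Prod.snd hkd
    linarith [show d.2 ≤ 0 from hd₂]
  have hx : (φ, σ) ∉ interior K := by
    intro h
    have hnhds : ∀ᶠ t in 𝓝 σ, (φ, t) ∈ K :=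
      ((continuous_const.prodMk continuous_id).tendsto σ).eventually
        (isOpen_interior.mem_nhds h) |>.mono fun _ ht => interior_subset ht
    obtain ⟨t, hσt, ht⟩ := hnhds.exists_gt
    exact (hsec t ht).not_gt hσt
  obtain ⟨z, hz, hσz, -⟩ := hσ.exists_between (sub_one_lt σ)
  have hq : (φ, σ - 1) ∈ K :=
    ⟨(φ, z), hz, (0, σ - 1 - z), ⟨rfl, by simp only [mem_Iic]; linarith⟩, by simp⟩
  obtain ⟨F, hF0, hF⟩ := exists_ne_zero_forall_le_of_notMem_interior
    (hC.add ((convex_singleton 0).prod (convex_Iic 0))) ⟨_, hq⟩ hx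
  refine ⟨F, hF0, ?_, fun p hp => hF p (hCK hp)⟩
  have hadd := map_add F (φ, σ - 1) (0, 1)
  rw [Prod.mk_add_mk, add_zero, sub_add_cancel] at hadd
  linarith [hF _ hq]

lemma IsLUB.isLUB_image_mul_sub {s : Set ℝ} {a β : ℝ} (h : IsLUB s a) (hβ : 0 ≤ β) :
    IsLUB ((fun z => β * (z - a)) '' s) 0 :=
  h.isLUB_of_tendsto (fun _ _ _ _ hzw => mul_le_mul_of_nonneg_left (sub_le_sub_right hzw a) hβ)
    h.nonempty <| ((by fun_prop : Continuous fun z => β * (z - a)).tendsto' a 0 (by simp)).mono_left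
      nhdsWithin_le_nhds

lemma EReal.biSup_coe_eq_coe_iff_isLUB {ι : Type*} {s : Set ι} {F : ι → ℝ} {a : ℝ} :
    (⨆ i ∈ s, (F i : EReal)) = a ↔ IsLUB (F '' s) a := by
  have hsup : IsLUB ((↑) '' (F '' s) : Set EReal) (⨆ i ∈ s, (F i : EReal)) := by
    rw [Set.image_image]
    exact isLUB_biSup
  constructor
  · intro h
    rw [h] at hsup
    exact hsup.of_image EReal.coe_le_coe_iff
  · intro h
    refine hsup.unique ⟨?_, fun b hb => ?_⟩
    · rintro _ ⟨y, hy, rfl⟩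
      exact EReal.coe_le_coe_iff.2 (h.1 hy)
    · induction b using EReal.rec with
      | bot =>
        obtain ⟨y, hy⟩ := h.nonempty
        exact absurd (hb ⟨y, hy, rfl⟩) (EReal.bot_lt_coe y).not_ge
      | coe r =>
        exact EReal.coe_le_coe_iff.2 (h.2 fun y hy => EReal.coe_le_coe_iff.1 (hb ⟨y, hy, rfl⟩))
      | top => exact le_top

lemma msupport_eq_support {X : Type*} [TopologicalSpace X] [MeasurableSpace X] (μ : Measure X) :
    msupport μ = μ.support := by
  rw [Measure.support_eq_forall_isOpen]
  ext x
  simp only [msupport, mem_ofPred_eq, pos_iff_ne_zero]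
  exact forall_congr' fun U => Imp.swap

lemma ae_mem_of_msupport_subset {X : Type*} [TopologicalSpace X] [MeasurableSpace X]
    [HereditarilyLindelofSpace X] {μ : Measure X} {S : Set X} (h : msupport μ ⊆ S) :
    ∀ᵐ x ∂μ, x ∈ S :=
  mem_of_superset Measure.support_mem_ae (msupport_eq_support μ ▸ h)

def discreteMeasure {X ι : Type*} [MeasurableSpace X] [Fintype ι] (w : ι → ℝ) (x : ι → X) :
    Measure X :=
  ∑ i, ENNReal.ofReal (w i) • Measure.dirac (x i)

section discreteMeasure

variable {X ι : Type*} [MeasurableSpace X] [Fintype ι] (w : ι → ℝ) (x : ι → X)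

lemma integrable_discreteMeasure [MeasurableSingletonClass X] {E : Type*} [NormedAddCommGroup E]
    (h : X → E) :
    Integrable h (discreteMeasure w x) :=
  integrable_finsetSum_measure.2 fun _ _ =>
    (integrable_dirac enorm_lt_top).smul_measure ENNReal.ofReal_ne_top

lemma integral_discreteMeasure [MeasurableSingletonClass X] {E : Type*} [NormedAddCommGroup E]
    [NormedSpace ℝ E] [CompleteSpace E] (hw : ∀ i, 0 ≤ w i) (h : X → E) :
    ∫ y, h y ∂discreteMeasure w x = ∑ i, w i • h (x i) := by
  rw [discreteMeasure, integral_finsetSum_measure fun i _ =>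
    (integrable_dirac enorm_lt_top).smul_measure ENNReal.ofReal_ne_top]
  refine Finset.sum_congr rfl fun i _ => ?_
  rw [integral_smul_measure, integral_dirac, ENNReal.toReal_ofReal (hw i)]

lemma isProbabilityMeasure_discreteMeasure (hw : ∀ i, 0 ≤ w i) (hw₁ : ∑ i, w i = 1) :
    IsProbabilityMeasure (discreteMeasure w x) := by
  constructor
  simp [discreteMeasure, ← ENNReal.ofReal_sum_of_nonneg fun i _ => hw i, hw₁]

lemma msupport_discreteMeasure_subset [MeasurableSingletonClass X] [TopologicalSpace X]
    [T1Space X] :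
    msupport (discreteMeasure w x) ⊆ range x := by
  rw [msupport_eq_support]
  refine Measure.support_subset_of_isClosed (finite_range x).isClosed ?_
  rw [mem_ae_iff, discreteMeasure, Measure.coe_finsetSum, Finset.sum_apply]
  refine Finset.sum_eq_zero fun i _ => ?_
  simp [Measure.dirac_apply' _ (finite_range x).measurableSet.compl]

end discreteMeasure

lemma exists_fintype_of_mem_convexHull_image {R X E : Type*} [Field R] [LinearOrder R]
    [IsStrictOrderedRing R] [AddCommGroup E] [Module R E] {Γ : X → E} {S : Set X} {p : E}
    (hp : p ∈ convexHull R (Γ '' S)) :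
    ∃ (ι : Type) (_ : Fintype ι) (w : ι → R) (x : ι → X), (∀ i, 0 ≤ w i) ∧ ∑ i, w i = 1 ∧
      (∀ i, x i ∈ S) ∧ ∑ i, w i • Γ (x i) = p := by
  obtain ⟨ι, hι, w, z, hw₀, hw₁, hz, rfl⟩ := mem_convexHull_iff_exists_fintype.1 hp
  choose x hxS hxz using hz
  exact ⟨ι, hι, w, x, hw₀, hw₁, hxS, by simp_rw [hxz]⟩

lemma exists_mem_MC_integral_eq {n m : ℕ} (f : (Fin n → ℝ) → Fin m → ℝ) (g : (Fin n → ℝ) → ℝ)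
    (S : Set (Fin n → ℝ)) (φ : Fin m → ℝ) {z : ℝ}
    (hz : (φ, z) ∈ convexHull ℝ ((fun x => (f x, g x)) '' S)) :
    ∃ μ ∈ MC n m f g S φ, ∫ x, g x ∂μ = z := by
  obtain ⟨ι, _, w, x, hw₀, hw₁, hxS, hsum⟩ := exists_fintype_of_mem_convexHull_image hz
  refine ⟨discreteMeasure w x, ⟨isProbabilityMeasure_discreteMeasure w x hw₀ hw₁,
    (msupport_discreteMeasure_subset w x).trans (range_subset_iff.2 hxS),
    fun _ => integrable_discreteMeasure w x _, fun j => ?_, integrable_discreteMeasure w x g⟩, ?_⟩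
  · rw [integral_discreteMeasure w x hw₀]
    simpa [Prod.fst_sum, Finset.sum_apply] using congr_fun (congrArg Prod.fst hsum) j
  · rw [integral_discreteMeasure w x hw₀]
    simpa [Prod.snd_sum] using congrArg Prod.snd hsum

lemma integral_affine_of_mem_MC {n m : ℕ} {f : (Fin n → ℝ) → Fin m → ℝ} {g : (Fin n → ℝ) → ℝ}
    {S : Set (Fin n → ℝ)} {φ : Fin m → ℝ} (α : Fin m → ℝ) (β c : ℝ) {μ : Measure (Fin n → ℝ)}
    (hμ : μ ∈ MC n m f g S φ) :
    ∫ x, (∑ i, α i * f x i) + β * g x + c ∂μ = (∑ i, α i * φ i) + β * ∫ x, g x ∂μ + c := by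
  obtain ⟨hprob, -, hfi, hfe, hgi⟩ := hμ
  have hsum : Integrable (fun x => ∑ i, α i * f x i) μ :=
    integrable_finsetSum _ fun i _ => (hfi i).const_mul (α i)
  rw [integral_add (f := fun x => ∑ i, α i * f x i + β * g x) (hsum.add (hgi.const_mul β))
      (integrable_const c),
    integral_add (f := fun x => ∑ i, α i * f x i) hsum (hgi.const_mul β),
    integral_finsetSum _ fun i _ => (hfi i).const_mul (α i),
    integral_const_mul, integral_const, probReal_univ, one_smul]
  simp_rw [integral_const_mul, hfe]

lemma StrongDual.apply_prod_eq_sum_add {ι : Type*} [Fintype ι] [DecidableEq ι]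
    (F : StrongDual ℝ ((ι → ℝ) × ℝ)) (y : ι → ℝ) (t : ℝ) :
    F (y, t) = ∑ i, F (Pi.single i 1, 0) * y i + F (0, 1) * t := by
  have hyt : ((y, t) : (ι → ℝ) × ℝ) =
      ∑ i, y i • ((Pi.single i 1, 0) : (ι → ℝ) × ℝ) + t • (0, 1) := by
    ext
    · simp [Prod.fst_sum, Finset.sum_apply, Pi.single_apply]
    · simp [Prod.snd_sum]
  rw [hyt, map_add, map_sum, map_smul]
  simp_rw [map_smul, smul_eq_mul, mul_comm]

lemma image_snd_gam {n m : ℕ} (f : (Fin n → ℝ) → Fin m → ℝ) (g : (Fin n → ℝ) → ℝ)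
    (S : Set (Fin n → ℝ)) (φ : Fin m → ℝ) :
    Prod.snd '' gam n m f g S φ = {z | (φ, z) ∈ convexHull ℝ ((fun x => (f x, g x)) '' S)} := by
  ext z
  constructor
  · rintro ⟨⟨y, z⟩, ⟨h, rfl⟩, rfl⟩
    exact h
  · exact fun h => ⟨(φ, z), ⟨h, rfl⟩, rfl⟩

theorem supporting_hyperplane_sup_general {n m : ℕ}
    (f : (Fin n → ℝ) → Fin m → ℝ) (g : (Fin n → ℝ) → ℝ)
    (S : Set (Fin n → ℝ)) (φ : Fin m → ℝ) (σp : ℝ)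
    (hσ : (⨆ p ∈ gam n m f g S φ, ((p.2 : ℝ) : EReal)) = (σp : EReal)) :
    ∃ (α : Fin m → ℝ) (β c : ℝ), 0 ≤ β ∧
      ((α, β) : (Fin m → ℝ) × ℝ) ≠ 0 ∧
      (∀ x ∈ S, (∑ i, α i * f x i) + β * g x + c ≤ 0) ∧
      (⨆ μ ∈ MC n m f g S φ,
        ((∫ x, ((∑ i, α i * f x i) + β * g x + c) ∂μ : ℝ) : EReal)) = 0 := by
  have hlub := image_snd_gam f g S φ ▸ EReal.biSup_coe_eq_coe_iff_isLUB.1 hσ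
  obtain ⟨F, hF0, hβ, hFle⟩ := exists_supporting_functional_of_isLUB (convex_convexHull ℝ _) hlub
  set α : Fin m → ℝ := fun i => F (Pi.single i 1, 0)
  set β := F (0, 1)
  have hF : ∀ y t, F (y, t) = ∑ i, α i * y i + β * t := F.apply_prod_eq_sum_add
  have hS : ∀ x ∈ S, ∑ i, α i * f x i + β * g x + -F (φ, σp) ≤ 0 := fun x hx => by
    have := hFle _ (subset_convexHull ℝ _ (mem_image_of_mem _ hx))
    rw [hF (f x)] at this
    linarith
  have hval : ∀ μ ∈ MC n m f g S φ,
      ∫ x, ∑ i, α i * f x i + β * g x + -F (φ, σp) ∂μ = β * (∫ x, g x ∂μ - σp) := fun μ hμ => by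
    rw [integral_affine_of_mem_MC _ _ _ hμ, hF]
    ring
  refine ⟨α, β, -F (φ, σp), hβ, ?_, hS, ?_⟩
  · intro hαβ
    obtain ⟨hα, hβ0⟩ := Prod.mk_eq_zero.1 hαβ
    refine hF0 (ContinuousLinearMap.ext fun ⟨y, t⟩ => ?_)
    simp [hF, hα, hβ0]
  rw [← EReal.coe_zero, EReal.biSup_coe_eq_coe_iff_isLUB]
  refine ⟨?_, fun b hb => (hlub.isLUB_image_mul_sub hβ).2 ?_⟩
  · rintro _ ⟨μ, hμ, rfl⟩
    exact integral_nonpos_of_ae ((ae_mem_of_msupport_subset hμ.2.1).mono hS)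
  · rintro _ ⟨z, hz, rfl⟩
    obtain ⟨μ, hμ, rfl⟩ := exists_mem_MC_integral_eq f g S φ hz
    simpa only [hval μ hμ] using hb ⟨μ, hμ, rfl⟩

/-- supporting-hyperplane theorem, supremum case. -/
theorem supporting_hyperplane_sup {n m : ℕ}
    (f : (Fin n → ℝ) → Fin m → ℝ) (g : (Fin n → ℝ) → ℝ)
    (hf : ∀ i, Measurable fun x => f x i) (hg : Measurable g)
    (S : Set (Fin n → ℝ)) (φ : Fin m → ℝ) (σp : ℝ)
    (hσ : (⨆ p ∈ gam n m f g S φ, ((p.2 : ℝ) : EReal)) = (σp : EReal)) :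
    ∃ (α : Fin m → ℝ) (β c : ℝ), 0 ≤ β ∧
      ((α, β) : (Fin m → ℝ) × ℝ) ≠ 0 ∧
      (∀ x ∈ S, (∑ i, α i * f x i) + β * g x + c ≤ 0) ∧
      (⨆ μ ∈ MC n m f g S φ,
        ((∫ x, ((∑ i, α i * f x i) + β * g x + c) ∂μ : ℝ) : EReal)) = 0 :=
  supporting_hyperplane_sup_general f g S φ σp hσ
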